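/- Let G = (V,E) be a finite simple graph and m ≥ 2. The map sending a point x ∈ ℝ^V in a bounded region of the complement of A(G;m) to the pair consisting of (i) the orientation of G orienting each edge {u,w} as u → w when x_u > x_w, and (ii) the coloring σ(v) = ⌈x_v⌉, induces a bijection between bounded connected components of ℝ^V ∖ A(G;m) and pairs (O, σ) of an acyclic orientation O of G together with a coloring σ : V → {1, …, m−2} satisfying σ(u) ≥ σ(w) whenever u → w in O. -/

import Mathlib

open SimpleGraph Polynomial

/-- `r` is an orientation of the simple graph `G`: every directed edge lies over an
edge of `G`, and every edge of `G` gets exactly one of its two directions. -/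
def IsOrientation {V : Type*} (G : SimpleGraph V) (r : V → V → Prop) : Prop :=
  (∀ u v, r u v → G.Adj u v) ∧ (∀ u v, G.Adj u v → (r u v ↔ ¬ r v u))

/-- A directed relation is acyclic if it has no directed cycles. -/
def IsAcyclicRel {V : Type*} (r : V → V → Prop) : Prop :=
  ∀ v, ¬ Relation.TransGen r v v

/-- The number of acyclic orientations of `G`. -/
noncomputable def acyclicOrientationCount {V : Type*} (G : SimpleGraph V) : ℕ :=
  Nat.card {r : V → V → Prop // IsOrientation G r ∧ IsAcyclicRel r}

/-- The complement in `ℝ^V` of the arrangement `A(G;m)`, consisting of the hyperplanes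
`z_u = z_w` for edges `{u,w}` of `G` and `z_v = i` for `v ∈ V`, `i ∈ {0,…,m-2}`. -/
def arrComplement {V : Type*} (G : SimpleGraph V) (m : ℕ) : Set (V → ℝ) :=
  {z | (∀ u w, G.Adj u w → z u ≠ z w) ∧ ∀ v : V, ∀ i : ℕ, i ≤ m - 2 → z v ≠ (i : ℝ)}

/-- The bounded regions of `A(G;m)`. -/
def BoundedComponents {V : Type*} (G : SimpleGraph V) (m : ℕ) :=
  {C : Set (V → ℝ) //
    (∃ x ∈ arrComplement G m, C = connectedComponentIn (arrComplement G m) x) ∧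
    Bornology.IsBounded C}

/-- Pairs of an acyclic orientation of `G` and a compatible coloring in `{1,…,m-2}`. -/
def CompatPairs {V : Type*} (G : SimpleGraph V) (m : ℕ) :=
  {p : (V → V → Prop) × (V → ℤ) // IsOrientation G p.1 ∧ IsAcyclicRel p.1 ∧
    (∀ v, 1 ≤ p.2 v ∧ p.2 v ≤ (m : ℤ) - 2) ∧ ∀ u w, p.1 u w → p.2 w ≤ p.2 u}

/-! A bounded region lies in the open box `(0, m - 2)^V`: otherwise pushing an extreme
coordinate further out never meets a hyperplane, and the region contains a ray. Along a region
no hyperplane is crossed, so by the intermediate value theorem the order of the endpoints of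
every edge and the ceilings of all coordinates are constant; the resulting pair is a compatible
acyclic orientation. Conversely, the points realising a compatible pair `(O, σ)` form the convex
set given by `σ v - 1 < z v < σ v` and `z w < z u` for `u → w`, which misses the arrangement;
hence points with equal patterns lie in one region. This set is nonempty: take
`z v = σ v - 1 + t v`, with `t` valued in `(0, 1)` and `t w < t u` whenever `u → w`. -/

open Set Bornology

theorem IsPreconnected.lt_of_lt_of_forall_ne {X α : Type*} [TopologicalSpace X] [LinearOrder α]
    [TopologicalSpace α] [OrderClosedTopology α] {s : Set X} (hs : IsPreconnected s)
    {f g : X → α} (hf : ContinuousOn f s) (hg : ContinuousOn g s) (hfg : ∀ z ∈ s, f z ≠ g z)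
    {x y : X} (hx : x ∈ s) (hy : y ∈ s) (hlt : f x < g x) : f y < g y := by
  by_contra! hle
  obtain ⟨z, hz, hfgz⟩ := hs.intermediate_value₂ hx hy hf hg hlt.le hle
  exact hfg z hz hfgz

theorem not_isBounded_connectedComponentIn_of_forall_add_smul_mem {E : Type*}
    [NormedAddCommGroup E] [NormedSpace ℝ E] {S : Set E} {x d : E} (hd : d ≠ 0)
    (hray : ∀ t : ℝ, 0 ≤ t → x + t • d ∈ S) : ¬ IsBounded (connectedComponentIn S x) := by
  intro hb
  have hsub : (fun t : ℝ => x + t • d) '' Ici 0 ⊆ connectedComponentIn S x :=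
    (isPreconnected_Ici.image _ (by fun_prop : Continuous fun t : ℝ => x + t • d).continuousOn)
      |>.subset_connectedComponentIn ⟨0, self_mem_Ici, by simp⟩ (by
        rintro _ ⟨t, ht, rfl⟩; exact hray t ht)
  obtain ⟨M, hM⟩ := isBounded_iff_forall_norm_le.mp (hb.subset hsub)
  have hd' : 0 < ‖d‖ := norm_pos_iff.mpr hd
  set t := (M + ‖x‖ + 1) / ‖d‖
  have hM0 : ‖x‖ ≤ M := hM x ⟨0, self_mem_Ici, by simp⟩
  have ht : 0 ≤ t := div_nonneg (by linarith [norm_nonneg x]) hd'.le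
  have hnorm : ‖t • d‖ = M + ‖x‖ + 1 := by
    rw [norm_smul, Real.norm_of_nonneg ht, div_mul_cancel₀ _ hd'.ne']
  have hxtd : ‖x + t • d‖ ≤ M := hM _ ⟨t, ht, rfl⟩
  have := norm_sub_le (x + t • d) x
  rw [add_sub_cancel_left] at this
  linarith

theorem IsAcyclicRel.of_forall_lt {V α : Type*} [Preorder α] {r : V → V → Prop} (f : V → α)
    (hf : ∀ a b, r a b → f b < f a) : IsAcyclicRel r := by
  have key : ∀ a b, Relation.TransGen r a b → f b < f a := fun a b hab => by
    induction hab with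
    | single h => exact hf _ _ h
    | tail _ h ih => exact (hf _ _ h).trans ih
  exact fun v hv => lt_irrefl _ (key v v hv)

theorem IsAcyclicRel.exists_rank {V : Type*} [Finite V] {r : V → V → Prop}
    (hr : IsAcyclicRel r) : ∃ h : V → ℕ, ∀ a b, r a b → h b < h a := by
  classical
  have := Fintype.ofFinite V
  refine ⟨fun v => (Finset.univ.filter (Relation.TransGen r v)).card,
    fun a b hab => Finset.card_lt_card ⟨fun z hz => ?_, fun hsub => ?_⟩⟩
  · simp only [Finset.mem_filter, Finset.mem_univ, true_and] at hz ⊢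
    exact .head hab hz
  · have hb := hsub (by simpa using Relation.TransGen.single hab)
    exact hr b (by simpa using hb)

theorem IsOrientation.or_of_adj {V : Type*} {G : SimpleGraph V} {r : V → V → Prop}
    (hr : IsOrientation G r) {u w : V} (huw : G.Adj u w) : r u w ∨ r w u :=
  or_iff_not_imp_left.mpr fun h => not_not.mp (mt (hr.2 u w huw).mpr h)

theorem one_le_ceil_and_ceil_le_of_mem_Ioo {a : ℝ} {n : ℕ} (h : a ∈ Ioo 0 (n : ℝ)) :
    1 ≤ ⌈a⌉ ∧ ⌈a⌉ ≤ n :=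
  ⟨Int.ceil_pos.mpr h.1, Int.ceil_le.mpr (by exact_mod_cast h.2.le)⟩

section Arrangement

variable {V : Type*} {G : SimpleGraph V} {m : ℕ}

theorem ne_intCast_of_mem_arrComplement {z : V → ℝ} (hz : z ∈ arrComplement G m) (v : V)
    {k : ℤ} (hk : 0 ≤ k ∧ k ≤ (m - 2 : ℕ)) : z v ≠ k := by
  lift k to ℕ using hk.1
  exact_mod_cast hz.2 v k (by exact_mod_cast hk.2)

theorem lt_ceil_of_mem_arrComplement {x : V → ℝ} (hx : x ∈ arrComplement G m) {v : V}
    (hv : x v ∈ Ioo 0 ((m - 2 : ℕ) : ℝ)) : x v < ⌈x v⌉ := by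
  have hk := one_le_ceil_and_ceil_le_of_mem_Ioo hv
  exact (Int.le_ceil _).lt_of_ne (ne_intCast_of_mem_arrComplement hx v ⟨by omega, hk.2⟩)

theorem add_smul_single_mem_arrComplement [DecidableEq V] {x : V → ℝ}
    (hx : x ∈ arrComplement G m) {v₀ : V} {s : ℝ}
    (hadj : ∀ w, G.Adj v₀ w → s * x w < s * x v₀)
    (hlevel : ∀ i : ℕ, i ≤ m - 2 → s * i < s * x v₀) {t : ℝ} (ht : 0 ≤ t) :
    x + t • Pi.single v₀ s ∈ arrComplement G m := by
  set y := x + t • Pi.single v₀ s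
  have hy₀ : s * x v₀ ≤ s * y v₀ := by
    simp only [y, Pi.add_apply, Pi.smul_apply, Pi.single_eq_same, smul_eq_mul]
    nlinarith [mul_nonneg ht (mul_self_nonneg s)]
  have hy : ∀ w, w ≠ v₀ → y w = x w := fun w hw => by simp [y, hw]
  refine ⟨fun u w huw hyuw => ?_, fun v i hi hyvi => ?_⟩
  · rcases eq_or_ne u v₀ with rfl | hu
    · have := hadj w huw
      rw [hy w (G.ne_of_adj huw).symm] at hyuw
      rw [hyuw] at hy₀
      linarith
    · rcases eq_or_ne w v₀ with rfl | hw
      · have := hadj u huw.symm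
        rw [hy u hu] at hyuw
        rw [← hyuw] at hy₀
        linarith
      · exact hx.1 u w huw (by rwa [hy u hu, hy w hw] at hyuw)
  · rcases eq_or_ne v v₀ with rfl | hv
    · have := hlevel i hi
      rw [hyvi] at hy₀
      linarith
    · exact hx.2 v i hi (by rwa [hy v hv] at hyvi)

theorem lt_iff_of_mem_connectedComponentIn {x y : V → ℝ}
    (hy : y ∈ connectedComponentIn (arrComplement G m) x) {u w : V} (huw : G.Adj u w) :
    y w < y u ↔ x w < x u := by
  set C := connectedComponentIn (arrComplement G m) x
  have hx : x ∈ C := mem_connectedComponentIn (connectedComponentIn_nonempty_iff.mp ⟨y, hy⟩)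
  have key : ∀ a ∈ C, ∀ b ∈ C, a w < a u → b w < b u := fun a ha b hb =>
    isPreconnected_connectedComponentIn.lt_of_lt_of_forall_ne (continuous_apply w).continuousOn
      (continuous_apply u).continuousOn
      (fun z hz => (connectedComponentIn_subset _ x hz).1 w u huw.symm) ha hb
  exact ⟨key y hy x hx, key x hx y hy⟩

variable [Fintype V]

theorem mem_Ioo_of_isBounded_connectedComponentIn {x y : V → ℝ}
    (hb : IsBounded (connectedComponentIn (arrComplement G m) x))
    (hy : y ∈ connectedComponentIn (arrComplement G m) x) (v : V) :
    y v ∈ Ioo 0 ((m - 2 : ℕ) : ℝ) := by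
  classical
  have hyF := connectedComponentIn_subset _ _ hy
  rw [connectedComponentIn_eq hy] at hb
  have : Nonempty V := ⟨v⟩
  constructor
  · by_contra! hle
    obtain ⟨v₀, hv₀⟩ := Finite.exists_min y
    have hneg : y v₀ < 0 :=
      ((hv₀ v).trans hle).lt_of_ne (by simpa using hyF.2 v₀ 0 (Nat.zero_le _))
    refine not_isBounded_connectedComponentIn_of_forall_add_smul_mem (d := Pi.single v₀ (-1))
      (Pi.single_ne_zero_iff.mpr (neg_ne_zero.mpr one_ne_zero))
      (fun t ht => add_smul_single_mem_arrComplement hyF (fun w hw => ?_) (fun i _ => ?_) ht) hb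
    · linarith [(hv₀ w).lt_of_ne (hyF.1 v₀ w hw)]
    · linarith [(Nat.cast_nonneg i : (0 : ℝ) ≤ i)]
  · by_contra! hle
    obtain ⟨v₀, hv₀⟩ := Finite.exists_max y
    have hpos : ((m - 2 : ℕ) : ℝ) < y v₀ :=
      (hle.trans (hv₀ v)).lt_of_ne (hyF.2 v₀ (m - 2) le_rfl).symm
    refine not_isBounded_connectedComponentIn_of_forall_add_smul_mem (d := Pi.single v₀ 1)
      (Pi.single_ne_zero_iff.mpr one_ne_zero)
      (fun t ht => add_smul_single_mem_arrComplement hyF (fun w hw => ?_) (fun i hi => ?_) ht) hb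
    · linarith [(hv₀ w).lt_of_ne (hyF.1 v₀ w hw).symm]
    · linarith [(Nat.cast_le (α := ℝ)).mpr hi]

theorem ceil_eq_of_mem_connectedComponentIn {x y : V → ℝ}
    (hb : IsBounded (connectedComponentIn (arrComplement G m) x))
    (hy : y ∈ connectedComponentIn (arrComplement G m) x) (v : V) : ⌈y v⌉ = ⌈x v⌉ := by
  set C := connectedComponentIn (arrComplement G m) x
  have hx : x ∈ C := mem_connectedComponentIn (connectedComponentIn_nonempty_iff.mp ⟨y, hy⟩)
  have key : ∀ a ∈ C, ∀ b ∈ C, ⌈a v⌉ ≤ ⌈b v⌉ := fun a ha b hbC => by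
    have hbox := mem_Ioo_of_isBounded_connectedComponentIn hb hbC v
    have hk := one_le_ceil_and_ceil_le_of_mem_Ioo hbox
    refine Int.ceil_le.mpr (isPreconnected_connectedComponentIn.lt_of_lt_of_forall_ne
      (continuous_apply v).continuousOn continuousOn_const (fun z hz => ?_) hbC ha
      (lt_ceil_of_mem_arrComplement (connectedComponentIn_subset _ _ hbC) hbox)).le
    exact ne_intCast_of_mem_arrComplement (connectedComponentIn_subset _ _ hz) v ⟨by omega, hk.2⟩
  exact le_antisymm (key y hy x hx) (key x hx y hy)

theorem isBounded_connectedComponentIn_of_mem_Ioo {y : V → ℝ} (hy : y ∈ arrComplement G m)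
    (hbox : ∀ v, y v ∈ Ioo 0 ((m - 2 : ℕ) : ℝ)) :
    IsBounded (connectedComponentIn (arrComplement G m) y) := by
  have hC := isPreconnected_connectedComponentIn (F := arrComplement G m) (x := y)
  have hyC := mem_connectedComponentIn hy
  refine (Metric.isBounded_Icc (0 : V → ℝ) fun _ => ((m - 2 : ℕ) : ℝ)).subset
    fun z hz => ⟨fun v => ?_, fun v => ?_⟩
  · refine (hC.lt_of_lt_of_forall_ne continuousOn_const (continuous_apply v).continuousOn
      (fun z' hz' => ?_) hyC hz (hbox v).1).le
    simpa [eq_comm] using (connectedComponentIn_subset _ y hz').2 v 0 (Nat.zero_le _)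
  · exact (hC.lt_of_lt_of_forall_ne (continuous_apply v).continuousOn continuousOn_const
      (fun z' hz' => (connectedComponentIn_subset _ y hz').2 v (m - 2) le_rfl) hyC hz
      (hbox v).2).le

end Arrangement

section Patterns

variable {V : Type*} {G : SimpleGraph V} {m : ℕ}

noncomputable def regionPattern (G : SimpleGraph V) (x : V → ℝ) : (V → V → Prop) × (V → ℤ) :=
  (fun u w => G.Adj u w ∧ x w < x u, fun v => ⌈x v⌉)

def IsCompatPair (G : SimpleGraph V) (m : ℕ) (p : (V → V → Prop) × (V → ℤ)) : Prop :=
  IsOrientation G p.1 ∧ IsAcyclicRel p.1 ∧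
    (∀ v, 1 ≤ p.2 v ∧ p.2 v ≤ (m : ℤ) - 2) ∧ ∀ u w, p.1 u w → p.2 w ≤ p.2 u

def patternCell (p : (V → V → Prop) × (V → ℤ)) : Set (V → ℝ) :=
  {z | (∀ u w, p.1 u w → z w < z u) ∧ ∀ v, z v ∈ Ioo ((p.2 v : ℝ) - 1) (p.2 v)}

theorem convex_patternCell (p : (V → V → Prop) × (V → ℤ)) : Convex ℝ (patternCell p) := by
  have hedge : ∀ u w : V, Convex ℝ {z : V → ℝ | z w < z u} := fun u w => by
    simpa only [sub_neg] using convex_halfSpace_lt (f := fun z : V → ℝ => z w - z u)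
      ⟨fun _ _ => by simp only [Pi.add_apply]; ring, fun _ _ => by
        simp only [Pi.smul_apply, smul_eq_mul]; ring⟩ 0
  have hcoord : ∀ v (a b : ℝ), Convex ℝ {z : V → ℝ | z v ∈ Ioo a b} := fun v a b =>
    (convex_Ioo a b).linear_preimage (LinearMap.proj (R := ℝ) (φ := fun _ : V => ℝ) v)
  simp only [patternCell, ofPred_and, ofPred_forall]
  exact (convex_iInter fun u => convex_iInter fun w => convex_iInter fun _ => hedge u w).inter
    (convex_iInter fun v => hcoord v _ _)

theorem patternCell_subset_arrComplement {p : (V → V → Prop) × (V → ℤ)}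
    (hp : IsOrientation G p.1) : patternCell p ⊆ arrComplement G m := by
  refine fun z hz => ⟨fun u w huw => ?_, fun v i _ hzi => ?_⟩
  · rcases hp.or_of_adj huw with h | h
    exacts [(hz.1 u w h).ne', (hz.1 w u h).ne]
  · have h := hz.2 v
    rw [hzi] at h
    have h1 : (i : ℤ) < p.2 v := by exact_mod_cast h.2
    have h2 : p.2 v - 1 < (i : ℤ) := by exact_mod_cast h.1
    omega

theorem regionPattern_eq_of_mem_patternCell {p : (V → V → Prop) × (V → ℤ)}
    (hp : IsOrientation G p.1) {z : V → ℝ} (hz : z ∈ patternCell p) : regionPattern G z = p := by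
  refine Prod.ext (funext₂ fun u w =>
      propext ⟨fun ⟨huw, hlt⟩ => ?_, fun h => ⟨hp.1 u w h, hz.1 u w h⟩⟩)
    (funext fun v => Int.ceil_eq_iff.mpr ⟨(hz.2 v).1, (hz.2 v).2.le⟩)
  exact (hp.or_of_adj huw).resolve_right fun h => (hz.1 w u h).asymm hlt

theorem mem_Ioo_of_mem_patternCell {p : (V → V → Prop) × (V → ℤ)}
    (hcol : ∀ v, 1 ≤ p.2 v ∧ p.2 v ≤ (m : ℤ) - 2) {z : V → ℝ} (hz : z ∈ patternCell p) (v : V) :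
    z v ∈ Ioo 0 ((m - 2 : ℕ) : ℝ) := by
  have h1 : (1 : ℝ) ≤ p.2 v := by exact_mod_cast (hcol v).1
  have h2 : (p.2 v : ℝ) ≤ ((m - 2 : ℕ) : ℝ) := by
    have := hcol v
    exact_mod_cast (show p.2 v ≤ ((m - 2 : ℕ) : ℤ) by omega)
  exact ⟨by linarith [(hz.2 v).1], by linarith [(hz.2 v).2]⟩

theorem patternCell_nonempty [Finite V] {p : (V → V → Prop) × (V → ℤ)}
    (hacyc : IsAcyclicRel p.1) (hcomp : ∀ u w, p.1 u w → p.2 w ≤ p.2 u) :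
    (patternCell p).Nonempty := by
  obtain ⟨h, hh⟩ := hacyc.exists_rank
  set t : V → ℝ := fun v => 1 - 1 / (h v + 2)
  have ht : ∀ v, t v ∈ Ioo 0 1 := fun v =>
    ⟨sub_pos.mpr ((div_lt_one (by positivity)).mpr (by linarith [(h v).cast_nonneg (α := ℝ)])),
      sub_lt_self 1 (by positivity)⟩
  refine ⟨fun v => p.2 v - 1 + t v, fun u w huw => ?_, fun v => ⟨?_, ?_⟩⟩
  · have htwu : t w < t u := sub_lt_sub_left (one_div_lt_one_div_of_lt (by positivity)
      (by exact_mod_cast Nat.add_lt_add_right (hh u w huw) 2)) 1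
    have : (p.2 w : ℝ) ≤ p.2 u := by exact_mod_cast hcomp u w huw
    linarith
  · linarith [(ht v).1]
  · linarith [(ht v).2]

theorem isCompatPair_regionPattern [Fintype V] {x : V → ℝ} (hx : x ∈ arrComplement G m)
    (hb : IsBounded (connectedComponentIn (arrComplement G m) x)) :
    IsCompatPair G m (regionPattern G x) := by
  refine ⟨⟨fun _ _ h => h.1, fun u w huw => ⟨fun h h' => h.2.asymm h'.2, fun h => ⟨huw, ?_⟩⟩⟩,
    IsAcyclicRel.of_forall_lt x fun a b h => h.2, fun v => ?_, fun _ _ h => Int.ceil_mono h.2.le⟩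
  · exact (hx.1 u w huw).lt_or_gt.resolve_left fun h' => h ⟨huw.symm, h'⟩
  · have := one_le_ceil_and_ceil_le_of_mem_Ioo
      (mem_Ioo_of_isBounded_connectedComponentIn hb (mem_connectedComponentIn hx) v)
    exact ⟨this.1, show ⌈x v⌉ ≤ (m : ℤ) - 2 by omega⟩

theorem mem_patternCell_regionPattern [Fintype V] {x : V → ℝ} (hx : x ∈ arrComplement G m)
    (hb : IsBounded (connectedComponentIn (arrComplement G m) x)) :
    x ∈ patternCell (regionPattern G x) :=
  ⟨fun _ _ h => h.2, fun v => ⟨sub_lt_iff_lt_add.mpr (Int.ceil_lt_add_one _),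
    lt_ceil_of_mem_arrComplement hx
      (mem_Ioo_of_isBounded_connectedComponentIn hb (mem_connectedComponentIn hx) v)⟩⟩

theorem regionPattern_eq_of_mem_connectedComponentIn [Fintype V] {x y : V → ℝ}
    (hb : IsBounded (connectedComponentIn (arrComplement G m) x))
    (hy : y ∈ connectedComponentIn (arrComplement G m) x) :
    regionPattern G y = regionPattern G x :=
  Prod.ext (funext₂ fun _ _ => propext (and_congr_right fun huw =>
      lt_iff_of_mem_connectedComponentIn hy huw))
    (funext fun v => ceil_eq_of_mem_connectedComponentIn hb hy v)

theorem connectedComponentIn_eq_of_regionPattern_eq [Fintype V] {x y : V → ℝ}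
    (hx : x ∈ arrComplement G m) (hbx : IsBounded (connectedComponentIn (arrComplement G m) x))
    (hy : y ∈ arrComplement G m) (hby : IsBounded (connectedComponentIn (arrComplement G m) y))
    (h : regionPattern G x = regionPattern G y) :
    connectedComponentIn (arrComplement G m) x = connectedComponentIn (arrComplement G m) y := by
  refine connectedComponentIn_eq ((convex_patternCell _).isPreconnected.subset_connectedComponentIn
    (mem_patternCell_regionPattern hx hbx)
    (patternCell_subset_arrComplement (isCompatPair_regionPattern hx hbx).1) ?_)
  rw [h]
  exact mem_patternCell_regionPattern hy hby

end Patterns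

namespace BoundedComponents

variable {V : Type*} {G : SimpleGraph V} {m : ℕ}

theorem eq_connectedComponentIn (C : BoundedComponents G m) {x : V → ℝ} (hx : x ∈ C.1) :
    C.1 = connectedComponentIn (arrComplement G m) x := by
  obtain ⟨⟨x₀, -, hC⟩, -⟩ := C.2
  rw [hC] at hx ⊢
  exact connectedComponentIn_eq hx

theorem nonempty (C : BoundedComponents G m) : C.1.Nonempty := by
  obtain ⟨⟨x, hx, hC⟩, -⟩ := C.2
  exact hC ▸ ⟨x, mem_connectedComponentIn hx⟩

theorem mem_arrComplement (C : BoundedComponents G m) {x : V → ℝ} (hx : x ∈ C.1) :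
    x ∈ arrComplement G m :=
  connectedComponentIn_nonempty_iff.mp (C.eq_connectedComponentIn hx ▸ ⟨x, hx⟩)

theorem isBounded_connectedComponentIn (C : BoundedComponents G m) {x : V → ℝ} (hx : x ∈ C.1) :
    IsBounded (connectedComponentIn (arrComplement G m) x) :=
  C.eq_connectedComponentIn hx ▸ C.2.2

variable [Fintype V]

noncomputable def pattern (C : BoundedComponents G m) : CompatPairs G m :=
  ⟨regionPattern G C.nonempty.some,
    isCompatPair_regionPattern (C.mem_arrComplement C.nonempty.some_mem)
      (C.isBounded_connectedComponentIn C.nonempty.some_mem)⟩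

theorem pattern_val (C : BoundedComponents G m) {x : V → ℝ} (hx : x ∈ C.1) :
    C.pattern.1 = regionPattern G x := by
  have hmem : C.nonempty.some ∈ connectedComponentIn (arrComplement G m) x := by
    rw [← C.eq_connectedComponentIn hx]
    exact C.nonempty.some_mem
  exact regionPattern_eq_of_mem_connectedComponentIn (C.isBounded_connectedComponentIn hx) hmem

theorem pattern_injective : Function.Injective (pattern (G := G) (m := m)) := by
  intro C D hCD
  obtain ⟨x, hx⟩ := C.nonempty
  obtain ⟨y, hy⟩ := D.nonempty
  have hxy : regionPattern G x = regionPattern G y := by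
    rw [← C.pattern_val hx, ← D.pattern_val hy, hCD]
  apply Subtype.ext
  rw [C.eq_connectedComponentIn hx, D.eq_connectedComponentIn hy]
  exact connectedComponentIn_eq_of_regionPattern_eq (C.mem_arrComplement hx)
    (C.isBounded_connectedComponentIn hx) (D.mem_arrComplement hy)
    (D.isBounded_connectedComponentIn hy) hxy

theorem pattern_surjective : Function.Surjective (pattern (G := G) (m := m)) := by
  rintro ⟨p, hor, hacyc, hcol, hcomp⟩
  obtain ⟨y, hy⟩ := patternCell_nonempty hacyc hcomp
  have hyF : y ∈ arrComplement G m := patternCell_subset_arrComplement hor hy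
  let C : BoundedComponents G m := ⟨connectedComponentIn (arrComplement G m) y, ⟨y, hyF, rfl⟩,
    isBounded_connectedComponentIn_of_mem_Ioo hyF (mem_Ioo_of_mem_patternCell hcol hy)⟩
  refine ⟨C, Subtype.ext ?_⟩
  rw [C.pattern_val (mem_connectedComponentIn hyF)]
  exact regionPattern_eq_of_mem_patternCell hor hy

end BoundedComponents

theorem bounded_regions_biject_compatible_pairs {V : Type*} [Fintype V]
    (G : SimpleGraph V) (m : ℕ) :
    ∃ e : BoundedComponents G m ≃ CompatPairs G m,
      ∀ (C : BoundedComponents G m) (x : V → ℝ), x ∈ C.1 →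
        ((e C).1.1 = fun u w => G.Adj u w ∧ x w < x u) ∧ ∀ v, (e C).1.2 v = ⌈x v⌉ := by
  refine ⟨.ofBijective _ ⟨BoundedComponents.pattern_injective,
    BoundedComponents.pattern_surjective⟩, fun C x hx => ?_⟩
  have hC := C.pattern_val hx
  exact ⟨congrArg Prod.fst hC, congrFun (congrArg Prod.snd hC)⟩
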